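/- arXiv:1804.08587 — 3 statements merged into one kernel-verified Lean document; each statement's English description precedes it below -/
import Mathlib

section
/- For real c > -1, the integral ∫_0^∞ [1 − t^c e^{-t} E_{1,c+1}(t)] dt equals c, where E_{1,c+1}(t) = Σ_{j=0}^∞ t^j/Γ(j+1+c). -/
open MeasureTheory Real

open Filter Set Topology Nat

namespace MLIntegralAux

noncomputable def M (b t : ℝ) : ℝ := ∑' j : ℕ, t ^ j / Real.Gamma ((j : ℝ) + 1 + b)

variable {b t : ℝ}

lemma gamma_pos (hb : -1 < b) (j : ℕ) : 0 < Real.Gamma ((j : ℝ) + 1 + b) := by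
  have : (0:ℝ) ≤ j := Nat.cast_nonneg j
  exact Real.Gamma_pos_of_pos (by linarith)

lemma fact_mul_le (hb : -1 < b) : ∀ j : ℕ,
    (j ! : ℝ) * Real.Gamma ((1:ℝ) + 1 + b) ≤ Real.Gamma ((j : ℝ) + 1 + 1 + b) := by
  intro j
  induction j with
  | zero => simp
  | succ j ih =>
    have harg : (0:ℝ) < (j:ℝ) + 1 + 1 + b := by
      have : (0:ℝ) ≤ j := Nat.cast_nonneg j
      linarith
    have h1 : Real.Gamma (((j:ℕ)+1 : ℕ) + 1 + 1 + b)
        = ((j:ℝ) + 1 + 1 + b) * Real.Gamma ((j:ℝ) + 1 + 1 + b) := by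
      rw [show ((((j:ℕ)+1 : ℕ)):ℝ) + 1 + 1 + b = ((j:ℝ) + 1 + 1 + b) + 1 by push_cast; ring]
      exact Real.Gamma_add_one harg.ne'
    rw [h1]
    have hj1 : ((j:ℝ) + 1) ≤ (j:ℝ) + 1 + 1 + b := by linarith
    have hGpos : 0 < Real.Gamma ((1:ℝ) + 1 + b) := Real.Gamma_pos_of_pos (by linarith)
    calc ((((j:ℕ)+1:ℕ)) ! : ℝ) * Real.Gamma ((1:ℝ) + 1 + b)
        = ((j:ℝ)+1) * ((j ! : ℝ) * Real.Gamma ((1:ℝ) + 1 + b)) := by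
          push_cast [Nat.factorial_succ]; ring
      _ ≤ ((j:ℝ)+1) * Real.Gamma ((j:ℝ) + 1 + 1 + b) := by
          have : (0:ℝ) ≤ (j:ℝ)+1 := by positivity
          exact mul_le_mul_of_nonneg_left ih this
      _ ≤ ((j:ℝ) + 1 + 1 + b) * Real.Gamma ((j:ℝ) + 1 + 1 + b) :=
          mul_le_mul_of_nonneg_right hj1 (Real.Gamma_pos_of_pos harg).le
  

lemma summable_M (hb : -1 < b) (t : ℝ) :
    Summable (fun j : ℕ => t ^ j / Real.Gamma ((j : ℝ) + 1 + b)) := by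
  rw [← summable_nat_add_iff 1]
  have hG2 : 0 < Real.Gamma ((1:ℝ) + 1 + b) := Real.Gamma_pos_of_pos (by linarith)
  apply Summable.of_norm_bounded
    (g := fun j : ℕ => (|t| / Real.Gamma ((1:ℝ)+1+b)) * (|t| ^ j / (j ! : ℝ)))
    ((Real.summable_pow_div_factorial |t|).mul_left _)
  intro j
  have hGpos : 0 < Real.Gamma ((j:ℝ) + 1 + 1 + b) := by
    have : (0:ℝ) ≤ j := Nat.cast_nonneg j
    exact Real.Gamma_pos_of_pos (by linarith)
  have hfac : (0:ℝ) < (j ! : ℝ) := by positivity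
  have hle := fact_mul_le hb j
  have hcast : (((j+1 : ℕ)):ℝ) + 1 + b = (j:ℝ) + 1 + 1 + b := by push_cast; ring
  calc ‖t ^ (j+1) / Real.Gamma ((((j+1 : ℕ)):ℝ) + 1 + b)‖
      = |t| ^ (j+1) / Real.Gamma ((j:ℝ) + 1 + 1 + b) := by
        rw [hcast, norm_div, norm_pow, Real.norm_eq_abs, Real.norm_eq_abs,
          abs_of_pos hGpos]
    _ ≤ |t| ^ (j+1) / ((j ! : ℝ) * Real.Gamma ((1:ℝ)+1+b)) :=
        div_le_div_of_nonneg_left (by positivity) (by positivity) hle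
    _ = (|t| / Real.Gamma ((1:ℝ)+1+b)) * (|t| ^ j / (j ! : ℝ)) := by
        rw [pow_succ]; field_simp

lemma summable_M' (hb : -1 < b) (t : ℝ) :
    Summable (fun j : ℕ => ((j:ℝ)+1) * t ^ j / Real.Gamma ((j : ℝ) + 1 + 1 + b)) := by
  have hG2 : 0 < Real.Gamma ((1:ℝ) + 1 + b) := Real.Gamma_pos_of_pos (by linarith)
  apply Summable.of_norm_bounded
    (g := fun j : ℕ => (1 / Real.Gamma ((1:ℝ)+1+b)) * ((2*|t|) ^ j / (j ! : ℝ)))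
    ((Real.summable_pow_div_factorial (2*|t|)).mul_left _)
  intro j
  have hGpos : 0 < Real.Gamma ((j:ℝ) + 1 + 1 + b) := by
    have : (0:ℝ) ≤ j := Nat.cast_nonneg j
    exact Real.Gamma_pos_of_pos (by linarith)
  have hfac : (0:ℝ) < (j ! : ℝ) := by positivity
  have h2p : ((j:ℝ) + 1) ≤ 2 ^ j := by
    have h := Nat.succ_le_of_lt ((Nat.lt_two_pow_self (n := j)))
    calc ((j:ℝ) + 1) = ((j+1 : ℕ) : ℝ) := by push_cast; ring
      _ ≤ ((2^j : ℕ) : ℝ) := by exact_mod_cast h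
      _ = (2:ℝ) ^ j := by push_cast; ring
  calc ‖((j:ℝ)+1) * t ^ j / Real.Gamma ((j:ℝ) + 1 + 1 + b)‖
      = ((j:ℝ)+1) * |t| ^ j / Real.Gamma ((j:ℝ) + 1 + 1 + b) := by
        rw [norm_div, norm_mul, norm_pow, Real.norm_eq_abs, Real.norm_eq_abs,
          Real.norm_eq_abs, abs_of_pos hGpos, abs_of_nonneg (by positivity : (0:ℝ) ≤ (j:ℝ)+1)]
    _ ≤ ((j:ℝ)+1) * |t| ^ j / ((j ! : ℝ) * Real.Gamma ((1:ℝ)+1+b)) :=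
        div_le_div_of_nonneg_left (by positivity) (by positivity) (fact_mul_le hb j)
    _ ≤ (2:ℝ) ^ j * |t| ^ j / ((j ! : ℝ) * Real.Gamma ((1:ℝ)+1+b)) := by
        apply div_le_div_of_nonneg_right ?_ (by positivity)
        exact mul_le_mul_of_nonneg_right h2p (by positivity)
    _ = (1 / Real.Gamma ((1:ℝ)+1+b)) * ((2*|t|) ^ j / (j ! : ℝ)) := by
        rw [mul_pow]; ring


lemma summable_deriv_terms (hb : -1 < b) (t : ℝ) :
    Summable (fun j : ℕ => (j:ℝ) * t ^ (j-1) / Real.Gamma ((j:ℝ)+1+b)) := by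
  rw [← summable_nat_add_iff 1]
  refine (summable_M' hb t).congr fun j => ?_
  simp only [Nat.add_sub_cancel]
  push_cast
  ring_nf

lemma deriv_sum_shift (hb : -1 < b) (t : ℝ) :
    ∑' j : ℕ, (j:ℝ) * t ^ (j-1) / Real.Gamma ((j:ℝ)+1+b)
      = ∑' j : ℕ, ((j:ℝ)+1) * t ^ j / Real.Gamma ((j:ℝ)+1+1+b) := by
  rw [Summable.tsum_eq_zero_add (summable_deriv_terms hb t)]
  simp only [Nat.cast_zero, zero_mul, zero_div, zero_add]
  refine tsum_congr fun j => ?_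
  simp only [Nat.add_sub_cancel]
  push_cast
  ring_nf

lemma hasDerivAt_M (hb : -1 < b) (t : ℝ) :
    HasDerivAt (fun s => M b s) (∑' j : ℕ, ((j:ℝ)+1) * t ^ j / Real.Gamma ((j:ℝ)+1+1+b)) t := by
  simp only [M]
  rw [← deriv_sum_shift hb t]
  set R : ℝ := |t| + 1 with hR
  have htR : t ∈ Ioo (-R) R := by
    constructor
    · have := neg_abs_le t; simp only [hR]; linarith
    · have := le_abs_self t; simp only [hR]; linarith
  apply hasDerivAt_tsum_of_isPreconnected
    (u := fun j : ℕ => (j:ℝ) * R ^ (j-1) / Real.Gamma ((j:ℝ)+1+b))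
    ?_ isOpen_Ioo (convex_Ioo _ _).isPreconnected
    (fun j y _ => (hasDerivAt_pow j y).div_const _) ?_ htR (summable_M hb t) htR
  · exact summable_deriv_terms hb R
  · intro j y hy
    have hyR : |y| ≤ R := by
      rw [abs_le]; exact ⟨(hy.1).le, (hy.2).le⟩
    have hGpos := gamma_pos hb j
    rw [norm_div, norm_mul, Real.norm_eq_abs, Real.norm_eq_abs, Real.norm_eq_abs,
      abs_of_pos hGpos, Nat.abs_cast, abs_pow]
    apply div_le_div_of_nonneg_right ?_ hGpos.le
    exact mul_le_mul_of_nonneg_left (pow_le_pow_left₀ (abs_nonneg y) hyR _) (Nat.cast_nonneg j)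

lemma M_shift (hb : -1 < b) (t : ℝ) :
    M b t = 1 / Real.Gamma (b+1) + t * M (b+1) t := by
  rw [M, Summable.tsum_eq_zero_add (summable_M hb t)]
  congr 1
  · norm_num [add_comm]
  · rw [M, ← tsum_mul_left]
    refine tsum_congr fun j => ?_
    push_cast
    rw [pow_succ]
    ring_nf

lemma M_deriv_sum (hb : -1 < b) (t : ℝ) :
    ∑' j : ℕ, ((j:ℝ)+1) * t ^ j / Real.Gamma ((j:ℝ)+1+1+b) = M b t - b * M (b+1) t := by
  have hb1 : -1 < b + 1 := by linarith
  rw [M, M, ← tsum_mul_left, ← Summable.tsum_sub (summable_M hb t) ((summable_M hb1 t).mul_left b)]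
  refine tsum_congr fun j => ?_
  have hj0 : (0:ℝ) ≤ j := Nat.cast_nonneg j
  have harg : (0:ℝ) < (j:ℝ)+1+b := by linarith
  have hG : Real.Gamma ((j:ℝ)+1+1+b) = ((j:ℝ)+1+b) * Real.Gamma ((j:ℝ)+1+b) := by
    rw [show (j:ℝ)+1+1+b = ((j:ℝ)+1+b)+1 by ring]
    exact Real.Gamma_add_one harg.ne'
  have hGpos := gamma_pos hb j
  rw [show (j:ℝ)+1+(b+1) = (j:ℝ)+1+1+b by ring, hG]
  field_simp
  ring


lemma hasDerivAt_exp_neg (t : ℝ) :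
    HasDerivAt (fun s : ℝ => Real.exp (-s)) (-Real.exp (-t)) t := by
  simpa using (hasDerivAt_neg t).exp

lemma M_shift' (hb : -1 < b) (t : ℝ) :
    t * M (b+1) t = M b t - 1 / Real.Gamma (b+1) := by
  rw [M_shift hb t]; ring

/-- Derivative of `ψ_b(s) = s^b e^{-s} M_b(s)`. -/
lemma hasDerivAt_psi (hb : -1 < b) {t : ℝ} (ht : 0 < t) :
    HasDerivAt (fun s : ℝ => s ^ b * Real.exp (-s) * M b s)
      (b * Real.exp (-t) * t ^ (b-1) / Real.Gamma (b+1)) t := by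
  have hrpow : HasDerivAt (fun s : ℝ => s ^ b) (b * t ^ (b-1)) t :=
    Real.hasDerivAt_rpow_const (Or.inl ht.ne')
  have h := (hrpow.mul (hasDerivAt_exp_neg t)).mul (hasDerivAt_M hb t)
  rw [M_deriv_sum hb t] at h
  convert h using 1
  · rfl
  · rfl
  · rfl
  simp only [Pi.mul_apply]
  have hMs := M_shift' hb t
  have htb : t ^ b = t ^ (b-1) * t := by
    rw [← Real.rpow_add_one ht.ne' (b-1), sub_add_cancel]
  rw [htb]
  linear_combination (b * Real.exp (-t) * t ^ (b-1)) * hMs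

/-- Derivative of `Ψ_b(s) = s^{b+1} e^{-s} M_b(s)`. -/
lemma hasDerivAt_Psi (hb : -1 < b) {t : ℝ} (ht : 0 < t) :
    HasDerivAt (fun s : ℝ => s ^ (b+1) * Real.exp (-s) * M b s)
      (t ^ b * Real.exp (-t) * M b t + b * t ^ b * Real.exp (-t) / Real.Gamma (b+1)) t := by
  have hrpow : HasDerivAt (fun s : ℝ => s ^ (b+1)) ((b+1) * t ^ b) t := by
    have h0 := Real.hasDerivAt_rpow_const (x := t) (p := b+1) (Or.inl ht.ne')
    rwa [add_sub_cancel_right] at h0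
  have h := (hrpow.mul (hasDerivAt_exp_neg t)).mul (hasDerivAt_M hb t)
  rw [M_deriv_sum hb t] at h
  convert h using 1
  · rfl
  · rfl
  · rfl
  simp only [Pi.mul_apply]
  have hMs := M_shift' hb t
  have htb : t ^ (b+1) = t ^ b * t := Real.rpow_add_one ht.ne' b
  rw [htb]
  linear_combination (b * t ^ b * Real.exp (-t)) * hMs

lemma continuous_M (hb : -1 < b) : Continuous (fun s => M b s) :=
  continuous_iff_continuousAt.mpr fun t => (hasDerivAt_M hb t).continuousAt


/-! ### Incomplete gamma machinery -/

noncomputable def gfun (c : ℝ) : ℝ → ℝ := fun s => Real.exp (-s) * s ^ c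

noncomputable def Q (c : ℝ) : ℝ → ℝ := fun t => ∫ s in Ioi t, gfun c s

noncomputable def Phi (c : ℝ) : ℝ → ℝ := fun s => s ^ (c+1) * Real.exp (-s) * M (c+1) s

variable {c : ℝ}

lemma g_int (hc : -1 < c) : IntegrableOn (gfun c) (Ioi 0) := by
  have h0 := Real.GammaIntegral_convergent (by linarith : (0:ℝ) < c + 1)
  rw [add_sub_cancel_right] at h0
  exact h0

lemma g_val (hc : -1 < c) : ∫ s in Ioi 0, gfun c s = Real.Gamma (c+1) := by
  rw [Real.Gamma_eq_integral (by linarith : (0:ℝ) < c + 1)]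
  simp only [add_sub_cancel_right]
  rfl

lemma g_nonneg {s : ℝ} (hs : 0 ≤ s) : 0 ≤ gfun c s :=
  mul_nonneg (Real.exp_pos _).le (Real.rpow_nonneg hs _)

lemma g_contOn (hc : -1 < c) : ContinuousOn (gfun c) (Ioi 0) := by
  intro s hs
  exact ((Real.continuous_exp.comp continuous_neg).continuousAt.mul
    (Real.continuousAt_rpow_const s c (Or.inl (ne_of_gt hs)))).continuousWithinAt

lemma Qsplit (hc : -1 < c) {a t : ℝ} (ha : 0 ≤ a) (hat : a ≤ t) :
    Q c a = (∫ s in Ioc a t, gfun c s) + Q c t := by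
  have hsub : Ioc a t ⊆ Ioi (0:ℝ) := fun s hs => lt_of_le_of_lt ha hs.1
  have hsub2 : Ioi t ⊆ Ioi (0:ℝ) := Ioi_subset_Ioi (ha.trans hat)
  rw [Q, show Ioi a = Ioc a t ∪ Ioi t from (Ioc_union_Ioi_eq_Ioi hat).symm]
  exact setIntegral_union (Ioc_disjoint_Ioi le_rfl) measurableSet_Ioi
    ((g_int hc).mono_set hsub) ((g_int hc).mono_set hsub2)

lemma Q_nonneg (hc : -1 < c) {t : ℝ} (ht : 0 ≤ t) : 0 ≤ Q c t :=
  setIntegral_nonneg measurableSet_Ioi fun s hs => g_nonneg (ht.trans hs.le)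

lemma integral_exp_half (a : ℝ) :
    (∫ s in Ioi a, Real.exp (-(1/2) * s)) = 2 * Real.exp (-(1/2) * a) := by
  have hderiv : ∀ x ∈ Ioi a, HasDerivAt (fun s : ℝ => -2 * Real.exp (-(1/2) * s))
      (Real.exp (-(1/2) * x)) x := by
    intro x _
    have h := (((hasDerivAt_id x).const_mul (-(1/2) : ℝ)).exp).const_mul (-2 : ℝ)
    simp only [id] at h
    convert h using 1
    · rfl
    · rfl
    ring_nf
  have hint : IntegrableOn (fun s : ℝ => Real.exp (-(1/2) * s)) (Ioi a) :=
    exp_neg_integrableOn_Ioi a (by norm_num)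
  have htend : Tendsto (fun s : ℝ => -2 * Real.exp (-(1/2) * s)) atTop (𝓝 0) := by
    have h2 : Tendsto (fun s : ℝ => (1/2 : ℝ) * s) atTop atTop :=
      tendsto_id.const_mul_atTop (by norm_num)
    have h3 := Real.tendsto_exp_neg_atTop_nhds_zero.comp h2
    have h4 : Tendsto (fun s : ℝ => Real.exp (-(1/2) * s)) atTop (𝓝 0) := by
      refine h3.congr fun s => ?_
      simp [Function.comp, neg_mul]
    simpa using h4.const_mul (-2 : ℝ)
  have hcont : ContinuousWithinAt (fun s : ℝ => -2 * Real.exp (-(1/2) * s)) (Ici a) a := by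
    apply Continuous.continuousWithinAt
    exact continuous_const.mul (Real.continuous_exp.comp (continuous_const.mul continuous_id))
  have := integral_Ioi_of_hasDerivAt_of_tendsto hcont hderiv hint htend
  rw [this]; ring


lemma Phi_deriv (hc : -1 < c) {t : ℝ} (ht : 0 < t) :
    HasDerivAt (fun s => Real.Gamma (c+1) * Phi c s) (gfun c t) t := by
  have hc1 : (0:ℝ) < c + 1 := by linarith
  have hGpos : 0 < Real.Gamma (c+1) := Real.Gamma_pos_of_pos hc1
  have h := (hasDerivAt_psi (b := c+1) (by linarith) ht).const_mul (Real.Gamma (c+1))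
  simp only [Phi]
  convert h using 1
  · rfl
  · rfl
  rw [add_sub_cancel_right, Real.Gamma_add_one hc1.ne']
  rw [gfun]
  field_simp

lemma Phi_cont (hc : -1 < c) : ContinuousAt (Phi c) 0 := by
  have hc1 : (0:ℝ) < c + 1 := by linarith
  have hr : ContinuousAt (fun s : ℝ => s ^ (c+1)) 0 :=
    Real.continuousAt_rpow_const 0 (c+1) (Or.inr hc1.le)
  exact (hr.mul (Real.continuous_exp.comp continuous_neg).continuousAt).mul
    ((continuous_M (by linarith)).continuousAt)

lemma Phi_zero (hc : -1 < c) : Phi c 0 = 0 := by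
  simp [Phi, Real.zero_rpow (by linarith : c + 1 ≠ 0)]

lemma Q_tendsto_zero (hc : -1 < c) :
    Tendsto (fun ε => ∫ s in Ioc (0:ℝ) ε, gfun c s) (𝓝[>] (0:ℝ)) (𝓝 0) := by
  have hc1 : (0:ℝ) < c + 1 := by linarith
  apply squeeze_zero_norm' (a := fun ε => ε ^ (c+1) / (c+1))
  · filter_upwards [self_mem_nhdsWithin] with ε (hε : 0 < ε)
    have hint1 : IntegrableOn (fun s : ℝ => s ^ c) (Ioc 0 ε) :=
      (intervalIntegrable_iff_integrableOn_Ioc_of_le hε.le).mp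
        (intervalIntegral.intervalIntegrable_rpow' hc)
    have hint2 : IntegrableOn (fun s => ‖gfun c s‖) (Ioc 0 ε) :=
      (((g_int hc).mono_set (fun s hs => hs.1)).norm)
    calc ‖∫ s in Ioc (0:ℝ) ε, gfun c s‖
        ≤ ∫ s in Ioc (0:ℝ) ε, ‖gfun c s‖ := norm_integral_le_integral_norm _
      _ ≤ ∫ s in Ioc (0:ℝ) ε, s ^ c := by
          apply setIntegral_mono_on hint2 hint1 measurableSet_Ioc
          intro s hs
          rw [Real.norm_eq_abs, abs_of_nonneg (g_nonneg hs.1.le)]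
          rw [gfun]
          calc Real.exp (-s) * s ^ c ≤ 1 * s ^ c := by
                apply mul_le_mul_of_nonneg_right ?_ (Real.rpow_nonneg hs.1.le _)
                rw [show (1:ℝ) = Real.exp 0 from (Real.exp_zero).symm]
                exact Real.exp_le_exp.mpr (by linarith [hs.1])
            _ = s ^ c := one_mul _
      _ = ε ^ (c+1) / (c+1) := by
          rw [← intervalIntegral.integral_of_le hε.le, integral_rpow (Or.inl hc),
            Real.zero_rpow hc1.ne']
          ring
  · have h1 : Tendsto (fun ε : ℝ => ε ^ (c+1)) (𝓝 0) (𝓝 (0:ℝ)) := by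
      have h := (Real.continuousAt_rpow_const 0 (c+1) (Or.inr hc1.le)).tendsto
      simpa [Real.zero_rpow hc1.ne'] using h
    have := (h1.div_const (c+1)).mono_left (nhdsWithin_le_nhds (s := Ioi (0:ℝ)))
    simpa using this

lemma key (hc : -1 < c) {t : ℝ} (ht : 0 < t) :
    Q c t + Real.Gamma (c+1) * Phi c t = Real.Gamma (c+1) := by
  have hc1 : (0:ℝ) < c + 1 := by linarith
  have hconst : ∀ ε, 0 < ε → ε ≤ t →
      Q c ε + Real.Gamma (c+1) * Phi c ε = Q c t + Real.Gamma (c+1) * Phi c t := by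
    intro ε hε hεt
    have hQ := Qsplit hc hε.le hεt
    have hFTC : ∫ s in ε..t, gfun c s
        = Real.Gamma (c+1) * Phi c t - Real.Gamma (c+1) * Phi c ε := by
      apply intervalIntegral.integral_eq_sub_of_hasDerivAt
      · intro s hs
        rw [uIcc_of_le hεt] at hs
        exact Phi_deriv hc (lt_of_lt_of_le hε hs.1)
      · apply ContinuousOn.intervalIntegrable
        rw [uIcc_of_le hεt]
        intro s hs
        exact ((g_contOn hc) s (lt_of_lt_of_le hε hs.1)).mono
          (fun x hx => lt_of_lt_of_le hε hx.1)
    rw [intervalIntegral.integral_of_le hεt] at hFTC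
    rw [hQ, hFTC]; ring
  have hlim : Tendsto (fun ε => Q c ε + Real.Gamma (c+1) * Phi c ε) (𝓝[>] (0:ℝ))
      (𝓝 (Real.Gamma (c+1))) := by
    have hQlim : Tendsto (Q c) (𝓝[>] (0:ℝ)) (𝓝 (Real.Gamma (c+1))) := by
      have h0 : Tendsto (fun ε => Q c 0 - ∫ s in Ioc (0:ℝ) ε, gfun c s) (𝓝[>] (0:ℝ))
          (𝓝 (Q c 0 - 0)) := tendsto_const_nhds.sub (Q_tendsto_zero hc)
      have hQ0 : Q c 0 = Real.Gamma (c+1) := g_val hc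
      rw [hQ0, sub_zero] at h0
      apply h0.congr'
      filter_upwards [self_mem_nhdsWithin] with ε (hε : 0 < ε)
      have := Qsplit hc le_rfl hε.le
      rw [hQ0] at this
      linarith
    have hΦlim : Tendsto (fun ε => Real.Gamma (c+1) * Phi c ε) (𝓝[>] (0:ℝ)) (𝓝 0) := by
      have h := ((Phi_cont hc).tendsto.const_mul (Real.Gamma (c+1))).mono_left
        (nhdsWithin_le_nhds (s := Ioi (0:ℝ)))
      simpa [Phi_zero hc] using h
    simpa using hQlim.add hΦlim
  have hlim2 : Tendsto (fun ε => Q c ε + Real.Gamma (c+1) * Phi c ε) (𝓝[>] (0:ℝ))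
      (𝓝 (Q c t + Real.Gamma (c+1) * Phi c t)) := by
    apply Tendsto.congr' ?_ tendsto_const_nhds
    filter_upwards [Ioc_mem_nhdsGT_of_mem (⟨le_rfl, ht⟩ : (0:ℝ) ∈ Ico 0 t)] with ε hε
    exact (hconst ε hε.1 hε.2).symm
  exact tendsto_nhds_unique hlim2 hlim


lemma g_bound (hc : -1 < c) :
    ∀ s : ℝ, 1 ≤ s → gfun c s ≤ (2:ℝ)^(⌈c⌉₊) * (⌈c⌉₊)! * Real.exp (-(1/2) * s) := by
  intro s hs
  set n := ⌈c⌉₊ with hn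
  have hs0 : (0:ℝ) < s := by linarith
  have h1 : s ^ c ≤ s ^ (n:ℝ) := Real.rpow_le_rpow_of_exponent_le hs (Nat.le_ceil c)
  have h2 : s ^ (n:ℝ) = s ^ n := Real.rpow_natCast s n
  have h3 : (s/2)^n ≤ (n)! * Real.exp (s/2) := by
    have h := Real.pow_div_factorial_le_exp (x := s/2) (by positivity) n
    rw [div_le_iff₀ (by positivity : (0:ℝ) < ((n)! : ℝ))] at h
    linarith
  have h4 : s ^ n = 2^n * (s/2)^n := by rw [← mul_pow]; congr 1; ring
  have hexp : Real.exp (s/2) * Real.exp (-s) = Real.exp (-(1/2) * s) := by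
    rw [← Real.exp_add]; congr 1; ring
  calc gfun c s = Real.exp (-s) * s ^ c := rfl
    _ ≤ Real.exp (-s) * s ^ n := by
        apply mul_le_mul_of_nonneg_left (h1.trans_eq h2) (Real.exp_pos _).le
    _ = 2^n * (s/2)^n * Real.exp (-s) := by rw [h4]; ring
    _ ≤ 2^n * ((n)! * Real.exp (s/2)) * Real.exp (-s) := by
        apply mul_le_mul_of_nonneg_right ?_ (Real.exp_pos _).le
        exact mul_le_mul_of_nonneg_left h3 (by positivity)
    _ = (2:ℝ)^n * (n)! * (Real.exp (s/2) * Real.exp (-s)) := by ring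
    _ = (2:ℝ)^n * (n)! * Real.exp (-(1/2) * s) := by rw [hexp]

/-- A global exponential bound for `Q`. -/
lemma Q_bound (hc : -1 < c) : ∃ K : ℝ, 0 < K ∧
    ∀ t : ℝ, 0 < t → Q c t ≤ K * Real.exp (-(1/2) * t) := by
  have hc1 : (0:ℝ) < c + 1 := by linarith
  have hGpos : 0 < Real.Gamma (c+1) := Real.Gamma_pos_of_pos hc1
  set C : ℝ := (2:ℝ)^(⌈c⌉₊) * (⌈c⌉₊)! with hC
  have hCpos : 0 < C := by positivity
  refine ⟨(Real.Gamma (c+1) + 2*C) * Real.exp (1/2), by positivity, ?_⟩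
  intro t ht
  rcases le_or_gt 1 t with h1t | h1t
  · -- tail case
    have hb1 : Q c t ≤ C * (2 * Real.exp (-(1/2) * t)) := by
      have hint1 : IntegrableOn (gfun c) (Ioi t) :=
        (g_int hc).mono_set (Ioi_subset_Ioi ht.le)
      have hint2 : IntegrableOn (fun s : ℝ => C * Real.exp (-(1/2) * s)) (Ioi t) :=
        (exp_neg_integrableOn_Ioi t (by norm_num : (0:ℝ) < 1/2)).const_mul C
      calc Q c t ≤ ∫ s in Ioi t, C * Real.exp (-(1/2) * s) := by
            apply setIntegral_mono_on hint1 hint2 measurableSet_Ioi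
            intro s hs
            exact g_bound hc s (h1t.trans hs.le)
        _ = C * (2 * Real.exp (-(1/2) * t)) := by
            rw [integral_const_mul, integral_exp_half]
    have hK : 2*C ≤ (Real.Gamma (c+1) + 2*C) * Real.exp (1/2) := by
      nlinarith [Real.one_le_exp (by norm_num : (0:ℝ) ≤ 1/2), hGpos]
    calc Q c t ≤ 2*C * Real.exp (-(1/2)*t) := by linarith [hb1]
      _ ≤ (Real.Gamma (c+1) + 2*C) * Real.exp (1/2) * Real.exp (-(1/2)*t) :=
          mul_le_mul_of_nonneg_right hK (Real.exp_pos _).le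
  · -- small t
    have hQle : Q c t ≤ Real.Gamma (c+1) := by
      rw [← g_val hc]
      apply setIntegral_mono_set (g_int hc)
      · exact (ae_restrict_iff' measurableSet_Ioi).mpr
          (Filter.Eventually.of_forall fun s hs => g_nonneg hs.le)
      · exact HasSubset.Subset.eventuallyLE (Ioi_subset_Ioi ht.le)
    have he : Real.exp (-(1/2)) ≤ Real.exp (-(1/2) * t) :=
      Real.exp_le_exp.mpr (by nlinarith)
    have he2 : Real.exp (1/2) * Real.exp (-(1/2)) = 1 := by
      rw [← Real.exp_add]; norm_num
    have hG2 : 0 ≤ 2*C := by positivity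
    nlinarith [Real.exp_pos (-(1/2) * t), Real.exp_pos ((1:ℝ)/2),
      mul_le_mul_of_nonneg_left he (by positivity : (0:ℝ) ≤ (Real.Gamma (c+1) + 2*C) * Real.exp (1/2))]


lemma F_formula (hc : -1 < c) {t : ℝ} (ht : 0 < t) :
    1 - t ^ c * Real.exp (-t) * M c t = (Q c t - gfun c t) / Real.Gamma (c+1) := by
  have hc1 : (0:ℝ) < c + 1 := by linarith
  have hGpos : 0 < Real.Gamma (c+1) := Real.Gamma_pos_of_pos hc1
  have hMs := M_shift hc t
  have hk := key hc ht
  simp only [Phi] at hk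
  rw [Real.rpow_add_one ht.ne' c] at hk
  have e1 : t^c * Real.exp (-t) * M c t
      = gfun c t / Real.Gamma (c+1) + t^c * t * Real.exp (-t) * M (c+1) t := by
    rw [hMs]; simp only [gfun]; field_simp
  have e2 : t^c * t * Real.exp (-t) * M (c+1) t
      = (Real.Gamma (c+1) - Q c t)/Real.Gamma (c+1) := by
    rw [eq_div_iff hGpos.ne']
    linear_combination hk
  rw [e1, e2]
  field_simp
  ring

lemma F_contOn (hc : -1 < c) :
    ContinuousOn (fun t : ℝ => 1 - t ^ c * Real.exp (-t) * M c t) (Ioi 0) := by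
  intro t ht
  exact (continuousAt_const.sub (((Real.continuousAt_rpow_const t c
    (Or.inl (ne_of_gt ht))).mul (Real.continuous_exp.comp continuous_neg).continuousAt).mul
    (continuous_M hc).continuousAt)).continuousWithinAt

lemma F_integrable (hc : -1 < c) :
    IntegrableOn (fun t : ℝ => 1 - t ^ c * Real.exp (-t) * M c t) (Ioi 0) := by
  have hc1 : (0:ℝ) < c + 1 := by linarith
  have hGpos : 0 < Real.Gamma (c+1) := Real.Gamma_pos_of_pos hc1
  obtain ⟨K, hK, hQb⟩ := Q_bound hc
  have hD : IntegrableOn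
      (fun t : ℝ => (K * Real.exp (-(1/2)*t) + gfun c t)/Real.Gamma (c+1)) (Ioi 0) :=
    (((exp_neg_integrableOn_Ioi 0 (by norm_num : (0:ℝ) < 1/2)).const_mul K).add
      (g_int hc)).div_const _
  apply Integrable.mono' hD ((F_contOn hc).aestronglyMeasurable measurableSet_Ioi)
  apply (ae_restrict_iff' measurableSet_Ioi).mpr
  apply Filter.Eventually.of_forall
  intro t ht
  rw [F_formula hc ht]
  have h1 : |Q c t - gfun c t| ≤ K * Real.exp (-(1/2)*t) + gfun c t := by
    rw [abs_sub_le_iff]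
    have h2 := Q_nonneg hc (le_of_lt ht)
    have h3 := g_nonneg (c := c) (le_of_lt ht)
    have h4 := hQb t ht
    have h5 := (Real.exp_pos (-(1/2)*t)).le
    constructor <;> nlinarith
  rw [Real.norm_eq_abs, abs_div, abs_of_pos hGpos]
  gcongr


lemma tendsto_exp_half : Tendsto (fun s : ℝ => Real.exp (-(1/2) * s)) atTop (𝓝 0) := by
  have h2 : Tendsto (fun s : ℝ => (1/2 : ℝ) * s) atTop atTop :=
    tendsto_id.const_mul_atTop (by norm_num)
  refine (Real.tendsto_exp_neg_atTop_nhds_zero.comp h2).congr fun s => ?_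
  simp [Function.comp, neg_mul]

lemma A_deriv (hc : -1 < c) {t : ℝ} (ht : 0 < t) :
    HasDerivAt (fun s : ℝ => s - s^(c+1)*Real.exp (-s)*M c s
        + c * (s^(c+1)*Real.exp (-s)*M (c+1) s))
      (1 - t ^ c * Real.exp (-t) * M c t) t := by
  have hc1 : (0:ℝ) < c + 1 := by linarith
  have hGpos : 0 < Real.Gamma (c+1) := Real.Gamma_pos_of_pos hc1
  have h1 := hasDerivAt_Psi hc ht
  have h2 := hasDerivAt_psi (b := c+1) (by linarith : (-1:ℝ) < c+1) ht
  have h := ((hasDerivAt_id t).sub h1).add (h2.const_mul c)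
  convert h using 1
  · rfl
  · rfl
  · rfl
  rw [add_sub_cancel_right, Real.Gamma_add_one hc1.ne']
  field_simp
  ring

end MLIntegralAux

open MLIntegralAux Filter Set Topology

/-- For real `c > -1`, `∫_0^∞ [1 − t^c e^{-t} E_{1,c+1}(t)] dt = c`, where
`E_{1,c+1}(t) = ∑_{j≥0} t^j / Γ(j+1+c)`. -/
theorem integral_one_sub_mittagLeffler (c : ℝ) (hc : -1 < c) :
    ∫ t in Set.Ioi (0 : ℝ),
      (1 - t ^ c * Real.exp (-t) * ∑' j : ℕ, t ^ j / Real.Gamma ((j : ℝ) + 1 + c)) = c := by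
  have hc1 : (0:ℝ) < c + 1 := by linarith
  have hGpos : 0 < Real.Gamma (c+1) := Real.Gamma_pos_of_pos hc1
  obtain ⟨K, hK, hQb⟩ := Q_bound hc
  set A : ℝ → ℝ := fun s => s - s^(c+1)*Real.exp (-s)*M c s
      + c * (s^(c+1)*Real.exp (-s)*M (c+1) s) with hA
  have hAderiv : ∀ t ∈ Ioi (0:ℝ), HasDerivAt A (1 - t ^ c * Real.exp (-t) * M c t) t :=
    fun t ht => A_deriv hc ht
  have hAcont : ContinuousWithinAt A (Ici 0) 0 := by
    apply ContinuousAt.continuousWithinAt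
    have hr : ContinuousAt (fun s : ℝ => s ^ (c+1)) 0 :=
      Real.continuousAt_rpow_const 0 (c+1) (Or.inr hc1.le)
    have he : ContinuousAt (fun s : ℝ => Real.exp (-s)) 0 :=
      (Real.continuous_exp.comp continuous_neg).continuousAt
    exact (continuousAt_id.sub ((hr.mul he).mul (continuous_M hc).continuousAt)).add
      (((hr.mul he).mul (continuous_M (by linarith : (-1:ℝ) < c+1)).continuousAt).const_mul c)
  have hgt : Tendsto (fun t : ℝ => t * gfun c t) atTop (𝓝 0) := by
    have h := tendsto_rpow_mul_exp_neg_mul_atTop_nhds_zero (c+1) 1 one_pos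
    apply h.congr'
    filter_upwards [Ioi_mem_atTop (0:ℝ)] with t (ht : 0 < t)
    simp only [gfun]
    rw [Real.rpow_add_one (ne_of_gt ht) c, neg_mul, one_mul]
    ring
  have hQ0t : Tendsto (fun t => Q c t) atTop (𝓝 0) := by
    apply squeeze_zero'
    · filter_upwards [Ioi_mem_atTop (0:ℝ)] with t (ht : 0 < t)
      exact Q_nonneg hc ht.le
    · filter_upwards [Ioi_mem_atTop (0:ℝ)] with t (ht : 0 < t)
      exact hQb t ht
    · simpa using tendsto_exp_half.const_mul K
  have hQt : Tendsto (fun t : ℝ => t * Q c t) atTop (𝓝 0) := by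
    apply squeeze_zero' (g := fun t : ℝ => K * (t * Real.exp (-(1/2) * t)))
    · filter_upwards [Ioi_mem_atTop (0:ℝ)] with t (ht : 0 < t)
      exact mul_nonneg ht.le (Q_nonneg hc ht.le)
    · filter_upwards [Ioi_mem_atTop (0:ℝ)] with t (ht : 0 < t)
      have := mul_le_mul_of_nonneg_left (hQb t ht) ht.le
      linarith [this]
    · have h := tendsto_rpow_mul_exp_neg_mul_atTop_nhds_zero 1 (1/2) (by norm_num)
      have h2 : Tendsto (fun t : ℝ => t * Real.exp (-(1/2) * t)) atTop (𝓝 0) := by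
        apply h.congr'
        filter_upwards [Ioi_mem_atTop (0:ℝ)] with t (ht : 0 < t)
        rw [Real.rpow_one]
      simpa using h2.const_mul K
  have hAtop : Tendsto A atTop (𝓝 c) := by
    have hAeq : A =ᶠ[atTop] (fun t => (t * Q c t - t * gfun c t)/Real.Gamma (c+1)
        + c * ((Real.Gamma (c+1) - Q c t)/Real.Gamma (c+1))) := by
      filter_upwards [Ioi_mem_atTop (0:ℝ)] with t (ht : 0 < t)
      have hFf := F_formula hc ht
      have hk := key hc ht
      simp only [Phi] at hk
      rw [Real.rpow_add_one (ne_of_gt ht) c] at hk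
      simp only [hA]
      rw [Real.rpow_add_one (ne_of_gt ht) c]
      have hP : t^c*t*Real.exp (-t)*M (c+1) t
          = (Real.Gamma (c+1) - Q c t)/Real.Gamma (c+1) := by
        rw [eq_div_iff hGpos.ne']
        linear_combination hk
      rw [hP]
      linear_combination t * hFf
    have hlimval : Tendsto (fun t => (t * Q c t - t * gfun c t)/Real.Gamma (c+1)
        + c * ((Real.Gamma (c+1) - Q c t)/Real.Gamma (c+1))) atTop (𝓝 c) := by
      have h1 : Tendsto (fun t => (t * Q c t - t * gfun c t)/Real.Gamma (c+1)
          + c * ((Real.Gamma (c+1) - Q c t)/Real.Gamma (c+1))) atTop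
          (𝓝 ((0 - 0)/Real.Gamma (c+1) + c * ((Real.Gamma (c+1) - 0)/Real.Gamma (c+1)))) :=
        ((hQt.sub hgt).div_const (Real.Gamma (c+1))).add
          (((tendsto_const_nhds.sub hQ0t).div_const (Real.Gamma (c+1))).const_mul c)
      have h2 : (0 - 0)/Real.Gamma (c+1)
          + c * ((Real.Gamma (c+1) - 0)/Real.Gamma (c+1)) = c := by
        field_simp
        ring
      rwa [h2] at h1
    exact hlimval.congr' hAeq.symm
  have hfinal := integral_Ioi_of_hasDerivAt_of_tendsto hAcont hAderiv (F_integrable hc) hAtop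
  have hA0 : A 0 = 0 := by
    simp [hA, Real.zero_rpow (ne_of_gt hc1)]
  rw [hA0, sub_zero] at hfinal
  exact hfinal
end

section
/- For a positive integer k and real c > -1, ∫_0^∞ [k − e^{-t} Σ_{j=0}^∞ t^{(j+c+1)/k − 1}/Γ((j+1+c)/k)] dt = c + (1−k)/2. -/
open MeasureTheory Real

open MeasureTheory Real Set Filter Topology
open scoped ENNReal

set_option maxHeartbeats 1000000

lemma summable_pow_div_gamma (α b : ℝ) (hα : 0 < α) (hb : 0 ≤ b) :
    Summable (fun m : ℕ => b ^ m / Real.Gamma ((m : ℝ) + α)) := by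
  apply summable_of_ratio_norm_eventually_le (r := 1/2) (by norm_num)
  filter_upwards [eventually_ge_atTop (⌈2 * b⌉₊ + 1)] with m hm
  have hm' : 2 * b ≤ (m : ℝ) := le_trans (Nat.le_ceil _) (by exact_mod_cast Nat.le_of_succ_le hm)
  have hma : (0:ℝ) < (m:ℝ) + α := by positivity
  have hG : 0 < Real.Gamma ((m:ℝ) + α) := Real.Gamma_pos_of_pos hma
  have hcast : ((m + 1 : ℕ) : ℝ) + α = ((m:ℝ) + α) + 1 := by push_cast; ring
  rw [hcast, Real.Gamma_add_one (ne_of_gt hma)]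
  have hG1 : 0 < ((m:ℝ) + α) * Real.Gamma ((m:ℝ) + α) := by positivity
  rw [Real.norm_eq_abs, Real.norm_eq_abs, abs_of_nonneg (by positivity), abs_of_nonneg (by positivity)]
  have key : b ^ (m + 1) / (((m:ℝ) + α) * Real.Gamma ((m:ℝ) + α))
      = (b ^ m / Real.Gamma ((m:ℝ) + α)) * (b / ((m:ℝ) + α)) := by
    rw [pow_succ, div_mul_div_comm, mul_comm (Real.Gamma ((m:ℝ) + α)) ((m:ℝ) + α)]
  rw [key]
  have h2 : b / ((m:ℝ) + α) ≤ 1/2 := by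
    rw [div_le_iff₀ hma]; nlinarith [hα]
  calc (b ^ m / Real.Gamma ((m:ℝ) + α)) * (b / ((m:ℝ) + α))
      ≤ (b ^ m / Real.Gamma ((m:ℝ) + α)) * (1/2) := by
        apply mul_le_mul_of_nonneg_left h2 (by positivity)
    _ = 1/2 * (b ^ m / Real.Gamma ((m:ℝ) + α)) := by ring

lemma summable_F (α : ℝ) (hα : 0 < α) {t : ℝ} (ht : 0 < t) :
    Summable (fun m : ℕ => t ^ ((m : ℝ) + α) / Real.Gamma ((m : ℝ) + α + 1)) := by
  have := (summable_pow_div_gamma (α + 1) t (by linarith) ht.le).mul_left (t ^ α)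
  apply this.congr
  intro m
  rw [mul_div_assoc', ← Real.rpow_natCast t m, ← Real.rpow_add ht,
    show (m:ℝ) + (α+1) = (m:ℝ) + α + 1 by ring, show α + (m:ℝ) = (m:ℝ) + α by ring]

lemma summable_G (α : ℝ) (hα : 0 < α) {t : ℝ} (ht : 0 < t) :
    Summable (fun m : ℕ => t ^ ((m : ℝ) + α - 1) / Real.Gamma ((m : ℝ) + α)) := by
  have := (summable_pow_div_gamma α t hα ht.le).mul_left (t ^ (α - 1))
  apply this.congr
  intro m
  rw [mul_div_assoc', ← Real.rpow_natCast t m, ← Real.rpow_add ht,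
    show α - 1 + (m:ℝ) = (m:ℝ) + α - 1 by ring]

lemma hasDerivAt_F (α : ℝ) (hα : 0 < α) {t : ℝ} (ht : 0 < t) :
    HasDerivAt (fun x => ∑' m : ℕ, x ^ ((m : ℝ) + α) / Real.Gamma ((m : ℝ) + α + 1))
      (∑' m : ℕ, t ^ ((m : ℝ) + α - 1) / Real.Gamma ((m : ℝ) + α)) t := by
  set b := t + 1 with hb
  have htb : t < b := by simp [hb]
  have hb0 : (0:ℝ) < b := by linarith
  set A := (t/2) ^ (α - 1) + b ^ (α - 1) with hA
  have hA0 : 0 ≤ A := by positivity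
  refine hasDerivAt_tsum_of_isPreconnected
    (u := fun m : ℕ => A * (b ^ m / Real.Gamma ((m : ℝ) + α)))
    (g := fun (m : ℕ) (x : ℝ) => x ^ ((m : ℝ) + α) / Real.Gamma ((m : ℝ) + α + 1))
    (g' := fun (m : ℕ) (y : ℝ) => y ^ ((m : ℝ) + α - 1) / Real.Gamma ((m : ℝ) + α))
    ((summable_pow_div_gamma α b hα hb0.le).mul_left A)
    (isOpen_Ioo (a := t/2) (b := b)) (isPreconnected_Ioo)
    (fun m y hy => ?_) (fun m y hy => ?_)
    (Set.mem_Ioo.mpr ⟨by linarith, htb⟩)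
    (summable_F α hα ht)
    (Set.mem_Ioo.mpr ⟨by linarith, htb⟩)
  · -- HasDerivAt
    have hy0 : 0 < y := lt_trans (by linarith [hy.1] : (0:ℝ) < t/2) hy.1
    have hma : (0:ℝ) < (m:ℝ) + α := by positivity
    have h1 := (Real.hasDerivAt_rpow_const (x := y) (p := (m:ℝ) + α)
      (Or.inl (ne_of_gt hy0))).div_const (Real.Gamma ((m:ℝ) + α + 1))
    refine h1.congr_deriv ?_
    rw [show (m:ℝ) + α + 1 = ((m:ℝ) + α) + 1 by ring, Real.Gamma_add_one (ne_of_gt hma)]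
    field_simp
  · -- bound
    have hy1 : t/2 < y := hy.1
    have hy2 : y < b := hy.2
    have hy0 : 0 < y := lt_trans (by linarith) hy1
    have hma : (0:ℝ) < (m:ℝ) + α := by positivity
    have hG : 0 < Real.Gamma ((m:ℝ) + α) := Real.Gamma_pos_of_pos hma
    rw [Real.norm_eq_abs, abs_of_nonneg (by positivity)]
    have hsplit : y ^ ((m:ℝ) + α - 1) = y ^ (α - 1) * y ^ m := by
      rw [← Real.rpow_natCast y m, ← Real.rpow_add hy0]; ring_nf
    have h1 : y ^ (α - 1) ≤ A := by
      rcases le_or_gt 0 (α - 1) with h | h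
      · calc y ^ (α-1) ≤ b ^ (α-1) := Real.rpow_le_rpow hy0.le hy2.le h
          _ ≤ A := le_add_of_nonneg_left (by positivity)
      · calc y ^ (α-1) ≤ (t/2) ^ (α-1) :=
            Real.rpow_le_rpow_of_nonpos (by linarith) hy1.le h.le
          _ ≤ A := le_add_of_nonneg_right (by positivity)
    have h2 : y ^ m ≤ b ^ m := pow_le_pow_left₀ hy0.le hy2.le m
    calc y ^ ((m:ℝ) + α - 1) / Real.Gamma ((m:ℝ) + α)
        = (y ^ (α-1) * y ^ m) / Real.Gamma ((m:ℝ) + α) := by rw [hsplit]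
      _ ≤ (A * b ^ m) / Real.Gamma ((m:ℝ) + α) := by
          gcongr
      _ = A * (b ^ m / Real.Gamma ((m:ℝ) + α)) := by ring

lemma tsum_exp_eq (α : ℝ) (hα : 0 < α) {t : ℝ} (ht : 0 < t) :
    Real.exp (-t) * ∑' m : ℕ, t ^ ((m : ℝ) + α) / Real.Gamma ((m : ℝ) + α + 1)
      = ∫ s in (0:ℝ)..t, Real.exp (-s) * s ^ (α - 1) / Real.Gamma α := by
  set Φ : ℝ → ℝ := fun x => Real.exp (-x) * ∑' m : ℕ, x ^ ((m : ℝ) + α) / Real.Gamma ((m : ℝ) + α + 1) with hΦ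
  set g : ℝ → ℝ := fun s => Real.exp (-s) * s ^ (α - 1) / Real.Gamma α with hg
  have hderiv : ∀ x : ℝ, 0 < x → HasDerivAt Φ (g x) x := by
    intro x hx
    have he : HasDerivAt (fun y : ℝ => Real.exp (-y)) (-Real.exp (-x)) x := by
      exact ((hasDerivAt_neg x).exp).congr_deriv (by ring)
    have h := he.mul (hasDerivAt_F α hα hx)
    refine h.congr_deriv ?_
    have hsplit : (∑' m : ℕ, x ^ ((m:ℝ) + α - 1) / Real.Gamma ((m:ℝ) + α))
        = x ^ (α - 1) / Real.Gamma α
          + ∑' m : ℕ, x ^ ((m:ℝ) + α) / Real.Gamma ((m:ℝ) + α + 1) := by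
      rw [(summable_G α hα hx).tsum_eq_zero_add]
      congr 1
      · norm_num
      · apply tsum_congr; intro m
        rw [show ((m+1 : ℕ):ℝ) + α - 1 = (m:ℝ) + α by push_cast; ring,
          show ((m+1 : ℕ):ℝ) + α = (m:ℝ) + α + 1 by push_cast; ring]
    rw [hsplit, hg]
    ring
  -- integrability facts
  have hgInt : IntegrableOn g (Set.Ioi (0:ℝ)) := (Real.GammaIntegral_convergent hα).div_const _
  have hgIntIcc : IntegrableOn g (Set.uIcc 0 t) := by
    rw [Set.uIcc_of_le ht.le, integrableOn_Icc_iff_integrableOn_Ioc]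
    exact hgInt.mono_set Set.Ioc_subset_Ioi_self
  have key : ∀ a ∈ Set.Ioo (0:ℝ) t, Φ t - Φ a = ∫ s in a..t, g s := by
    intro a ha
    refine (intervalIntegral.integral_eq_sub_of_hasDerivAt ?_ ?_).symm
    · intro x hx
      rw [Set.uIcc_of_le ha.2.le] at hx
      exact hderiv x (lt_of_lt_of_le ha.1 hx.1)
    · apply ContinuousOn.intervalIntegrable
      intro x hx
      rw [Set.uIcc_of_le ha.2.le] at hx
      have hx0 : 0 < x := lt_of_lt_of_le ha.1 hx.1
      apply ContinuousWithinAt.div_const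
      apply ContinuousWithinAt.mul
      · exact (Real.continuous_exp.comp continuous_neg).continuousWithinAt
      · exact (Real.continuousAt_rpow_const x (α-1) (Or.inl (ne_of_gt hx0))).continuousWithinAt
  have hne : (𝓝[Set.Ioo (0:ℝ) t] 0).NeBot := by
    apply mem_closure_iff_nhdsWithin_neBot.mp
    rw [closure_Ioo (ne_of_lt ht)]
    exact Set.mem_Icc.mpr ⟨le_refl 0, ht.le⟩
  -- limit of Φ a as a → 0+
  have hΦlim : Tendsto Φ (𝓝[Set.Ioo (0:ℝ) t] 0) (𝓝 0) := by
    set C := ∑' m : ℕ, (1:ℝ) ^ m / Real.Gamma ((m:ℝ) + (α + 1)) with hC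
    have hCsum : Summable (fun m : ℕ => (1:ℝ) ^ m / Real.Gamma ((m:ℝ) + (α+1))) :=
      summable_pow_div_gamma (α+1) 1 (by linarith) zero_le_one
    apply squeeze_zero' (f := Φ) (g := fun a => a ^ α * C)
    · filter_upwards [self_mem_nhdsWithin] with a ha
      have ha0 : 0 < a := ha.1
      apply mul_nonneg (Real.exp_pos _).le
      apply tsum_nonneg
      intro m
      have h1 : (0:ℝ) < (m:ℝ) + α + 1 := by positivity
      have h2 : 0 < Real.Gamma ((m:ℝ) + α + 1) := Real.Gamma_pos_of_pos h1
      positivity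
    · filter_upwards [self_mem_nhdsWithin, eventually_nhdsWithin_of_eventually_nhds
        (eventually_lt_nhds zero_lt_one)] with a ha ha1
      have ha0 : 0 < a := ha.1
      have hnn : 0 ≤ ∑' m : ℕ, a ^ ((m:ℝ) + α) / Real.Gamma ((m:ℝ) + α + 1) := by
        apply tsum_nonneg; intro m
        have h1 : (0:ℝ) < (m:ℝ) + α + 1 := by positivity
        have h2 : 0 < Real.Gamma ((m:ℝ) + α + 1) := Real.Gamma_pos_of_pos h1
        positivity
      have hle : Φ a ≤ ∑' m : ℕ, a ^ ((m:ℝ) + α) / Real.Gamma ((m:ℝ) + α + 1) := by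
        calc Real.exp (-a) * ∑' m : ℕ, a ^ ((m:ℝ) + α) / Real.Gamma ((m:ℝ) + α + 1)
            ≤ 1 * ∑' m : ℕ, a ^ ((m:ℝ) + α) / Real.Gamma ((m:ℝ) + α + 1) := by
              apply mul_le_mul_of_nonneg_right _ hnn
              exact Real.exp_le_one_iff.mpr (by linarith)
          _ = _ := one_mul _
      apply hle.trans
      have hterm : ∀ m : ℕ, a ^ ((m:ℝ) + α) / Real.Gamma ((m:ℝ) + α + 1)
          ≤ a ^ α * ((1:ℝ) ^ m / Real.Gamma ((m:ℝ) + (α+1))) := by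
        intro m
        have hma : (0:ℝ) < (m:ℝ) + α + 1 := by positivity
        have hG : 0 < Real.Gamma ((m:ℝ) + α + 1) := Real.Gamma_pos_of_pos hma
        rw [show (m:ℝ) + (α+1) = (m:ℝ) + α + 1 by ring, one_pow, mul_div_assoc',
          mul_one]
        rw [div_le_div_iff_of_pos_right hG]
        rw [show (m:ℝ) + α = α + (m:ℝ) by ring, Real.rpow_add ha0, Real.rpow_natCast]
        calc a ^ α * a ^ m ≤ a ^ α * 1 ^ m := by
              apply mul_le_mul_of_nonneg_left (pow_le_pow_left₀ ha0.le ha1.le m)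
                (Real.rpow_nonneg ha0.le _)
          _ = a ^ α := by simp
      calc ∑' m : ℕ, a ^ ((m:ℝ) + α) / Real.Gamma ((m:ℝ) + α + 1)
          ≤ ∑' m : ℕ, a ^ α * ((1:ℝ) ^ m / Real.Gamma ((m:ℝ) + (α+1))) := by
            exact Summable.tsum_le_tsum hterm (summable_F α hα ha0) (hCsum.mul_left _)
        _ = a ^ α * C := by rw [tsum_mul_left]
    · have h1 : Tendsto (fun a : ℝ => a ^ α) (𝓝[Set.Ioo (0:ℝ) t] 0) (𝓝 0) := by
        have h2 := (Real.continuousAt_rpow_const 0 α (Or.inr hα.le)).tendsto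
        rw [Real.zero_rpow (ne_of_gt hα)] at h2
        exact h2.mono_left nhdsWithin_le_nhds
      simpa using h1.mul_const C
  -- limit of the integral
  have hIlim : Tendsto (fun a => ∫ s in a..t, g s) (𝓝[Set.Ioo (0:ℝ) t] 0)
      (𝓝 (∫ s in (0:ℝ)..t, g s)) := by
    have hprim : Tendsto (fun a => ∫ s in (0:ℝ)..a, g s) (𝓝[Set.Ioo (0:ℝ) t] 0) (𝓝 0) := by
      have hcont := intervalIntegral.continuousOn_primitive_interval (a := (0:ℝ)) (b := t)
        (μ := volume) (f := g) hgIntIcc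
      have h0mem : (0:ℝ) ∈ Set.uIcc 0 t := Set.left_mem_uIcc
      have h2 := (hcont 0 h0mem).tendsto
      rw [intervalIntegral.integral_same] at h2
      apply h2.mono_left
      apply nhdsWithin_mono
      rw [Set.uIcc_of_le ht.le]
      exact fun x hx => Set.mem_Icc.mpr ⟨hx.1.le, hx.2.le⟩
    have heq : ∀ a ∈ Set.Ioo (0:ℝ) t, (∫ s in (0:ℝ)..t, g s) - (∫ s in (0:ℝ)..a, g s)
        = ∫ s in a..t, g s := by
      intro a ha
      have h1 : IntervalIntegrable g volume 0 a := by
        rw [intervalIntegrable_iff_integrableOn_Ioc_of_le ha.1.le]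
        exact hgInt.mono_set Set.Ioc_subset_Ioi_self
      have h2 : IntervalIntegrable g volume a t := by
        rw [intervalIntegrable_iff_integrableOn_Ioc_of_le ha.2.le]
        exact hgInt.mono_set ((Set.Ioc_subset_Ioc_left le_rfl).trans
          (Set.Ioc_subset_Ioi_self.trans (Set.Ioi_subset_Ioi ha.1.le)))
      rw [← intervalIntegral.integral_add_adjacent_intervals h1 h2]
      ring
    have h3 : Tendsto (fun a => (∫ s in (0:ℝ)..t, g s) - ∫ s in (0:ℝ)..a, g s)
        (𝓝[Set.Ioo (0:ℝ) t] 0) (𝓝 ((∫ s in (0:ℝ)..t, g s) - 0)) :=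
      tendsto_const_nhds.sub hprim
    rw [sub_zero] at h3
    apply h3.congr'
    filter_upwards [self_mem_nhdsWithin] with a ha using heq a ha
  have hconst : Tendsto (fun a : ℝ => Φ a + ∫ s in a..t, g s) (𝓝[Set.Ioo (0:ℝ) t] 0)
      (𝓝 (0 + ∫ s in (0:ℝ)..t, g s)) := hΦlim.add hIlim
  have hconst2 : Tendsto (fun a : ℝ => Φ a + ∫ s in a..t, g s) (𝓝[Set.Ioo (0:ℝ) t] 0)
      (𝓝 (Φ t)) := by
    apply tendsto_const_nhds.congr'
    filter_upwards [self_mem_nhdsWithin] with a ha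
    have h4 := key a ha
    linarith
  have heq2 := tendsto_nhds_unique hconst2 hconst
  show Φ t = ∫ s in (0:ℝ)..t, g s
  rw [heq2, zero_add]

lemma pointwise_eq (k : ℕ) (hk : 0 < k) (c : ℝ) (hc : -1 < c) {t : ℝ} (ht : 0 < t) :
    ((k : ℝ) - Real.exp (-t) *
        ∑' j : ℕ, t ^ (((j : ℝ) + c + 1) / k - 1) / Real.Gamma (((j : ℝ) + 1 + c) / k))
      = ∑ r ∈ Finset.range k,
          ((1 - ∫ s in (0:ℝ)..t,
              Real.exp (-s) * s ^ (((r:ℝ) + 1 + c) / k - 1) / Real.Gamma (((r:ℝ) + 1 + c) / k))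
            - Real.exp (-t) * (t ^ (((r:ℝ) + 1 + c) / k - 1) / Real.Gamma (((r:ℝ) + 1 + c) / k))) := by
  haveI : NeZero k := ⟨hk.ne'⟩
  have hk0 : (k:ℝ) ≠ 0 := Nat.cast_ne_zero.mpr hk.ne'
  have hkpos : (0:ℝ) < (k:ℝ) := Nat.cast_pos.mpr hk
  have hαpos : ∀ r : ℕ, 0 < ((r:ℝ) + 1 + c) / k := by
    intro r
    apply div_pos _ hkpos
    have := Nat.cast_nonneg (α := ℝ) r
    linarith
  set f : ℕ → ℝ := fun j => t ^ (((j : ℝ) + c + 1) / k - 1) / Real.Gamma (((j : ℝ) + 1 + c) / k)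
    with hf
  set E : Fin k × ℕ ≃ ℕ := (Equiv.prodComm (Fin k) ℕ).trans (Nat.divModEquiv k).symm with hE'
  have hE : ∀ (r : Fin k) (m : ℕ), E (r, m) = m * k + (r : ℕ) := by
    intro r m
    simp [hE', Nat.divModEquiv]
  have hterm : ∀ (r m : ℕ), f (m * k + r)
      = t ^ ((m:ℝ) + ((r:ℝ) + 1 + c) / k - 1) / Real.Gamma ((m:ℝ) + ((r:ℝ) + 1 + c) / k) := by
    intro r m
    simp only [hf]
    have e1 : ((↑(m * k + r):ℝ) + c + 1) / (k:ℝ) - 1 = (m:ℝ) + ((r:ℝ) + 1 + c) / k - 1 := by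
      push_cast
      field_simp
      ring
    have e2 : ((↑(m * k + r):ℝ) + 1 + c) / (k:ℝ) = (m:ℝ) + ((r:ℝ) + 1 + c) / k := by
      push_cast
      field_simp
      ring
    rw [e1, e2]
  have hfnn : ∀ j : ℕ, 0 ≤ f j := by
    intro j
    rw [hf]
    exact div_nonneg (Real.rpow_nonneg ht.le _) (Real.Gamma_pos_of_pos (hαpos j)).le
  have hslice : ∀ r : Fin k, Summable (fun m : ℕ => f (E (r, m))) := by
    intro r
    apply ((summable_G ((((r:ℕ):ℝ) + 1 + c) / k) (hαpos r) ht).congr)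
    intro m
    rw [hE, hterm]
  have hsumE : Summable (fun p : Fin k × ℕ => f (E p)) := by
    rw [summable_prod_of_nonneg (fun p => hfnn (E p))]
    exact ⟨hslice, Summable.of_finite⟩
  have hFsplit : (∑' j : ℕ, f j) = ∑ r ∈ Finset.range k, ∑' m : ℕ,
      t ^ ((m:ℝ) + ((r:ℝ) + 1 + c) / k - 1) / Real.Gamma ((m:ℝ) + ((r:ℝ) + 1 + c) / k) := by
    calc (∑' j : ℕ, f j) = ∑' p : Fin k × ℕ, f (E p) := (Equiv.tsum_eq E f).symm
      _ = ∑' r : Fin k, ∑' m : ℕ, f (E (r, m)) := Summable.tsum_prod' hsumE hslice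
      _ = ∑ r : Fin k, ∑' m : ℕ, f (E (r, m)) := tsum_fintype _
      _ = ∑ r : Fin k, ∑' m : ℕ,
            t ^ ((m:ℝ) + (((r:ℕ):ℝ) + 1 + c) / k - 1)
              / Real.Gamma ((m:ℝ) + (((r:ℕ):ℝ) + 1 + c) / k) := by
          apply Finset.sum_congr rfl
          intro r _
          apply tsum_congr
          intro m
          rw [hE, hterm]
      _ = _ := Fin.sum_univ_eq_sum_range (fun r : ℕ => ∑' m : ℕ,
            t ^ ((m:ℝ) + ((r:ℝ) + 1 + c) / k - 1)
              / Real.Gamma ((m:ℝ) + ((r:ℝ) + 1 + c) / k)) k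
  have hinner : ∀ r : ℕ,
      Real.exp (-t) * ∑' m : ℕ,
          t ^ ((m:ℝ) + ((r:ℝ) + 1 + c) / k - 1) / Real.Gamma ((m:ℝ) + ((r:ℝ) + 1 + c) / k)
      = Real.exp (-t) * (t ^ (((r:ℝ) + 1 + c) / k - 1) / Real.Gamma (((r:ℝ) + 1 + c) / k))
        + ∫ s in (0:ℝ)..t,
            Real.exp (-s) * s ^ (((r:ℝ) + 1 + c) / k - 1) / Real.Gamma (((r:ℝ) + 1 + c) / k) := by
    intro r
    rw [(summable_G (((r:ℝ) + 1 + c) / k) (hαpos r) ht).tsum_eq_zero_add, mul_add]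
    congr 1
    · norm_num
    · rw [show (∑' m : ℕ, t ^ (((m + 1 : ℕ):ℝ) + ((r:ℝ) + 1 + c) / k - 1)
            / Real.Gamma (((m + 1 : ℕ):ℝ) + ((r:ℝ) + 1 + c) / k))
          = ∑' m : ℕ, t ^ ((m:ℝ) + ((r:ℝ) + 1 + c) / k)
            / Real.Gamma ((m:ℝ) + ((r:ℝ) + 1 + c) / k + 1) from tsum_congr fun m => by
            rw [show ((m + 1 : ℕ):ℝ) + ((r:ℝ) + 1 + c) / k - 1 = (m:ℝ) + ((r:ℝ) + 1 + c) / k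
                by push_cast; ring,
              show ((m + 1 : ℕ):ℝ) + ((r:ℝ) + 1 + c) / k = (m:ℝ) + ((r:ℝ) + 1 + c) / k + 1
                by push_cast; ring]]
      exact tsum_exp_eq (((r:ℝ) + 1 + c) / k) (hαpos r) ht
  calc (k : ℝ) - Real.exp (-t) * ∑' j : ℕ, f j
      = ∑ r ∈ Finset.range k,
          ((1:ℝ) - (Real.exp (-t) * (t ^ (((r:ℝ) + 1 + c) / k - 1)
              / Real.Gamma (((r:ℝ) + 1 + c) / k))
            + ∫ s in (0:ℝ)..t, Real.exp (-s) * s ^ (((r:ℝ) + 1 + c) / k - 1)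
              / Real.Gamma (((r:ℝ) + 1 + c) / k))) := by
        rw [hFsplit, Finset.mul_sum,
          show (∑ r ∈ Finset.range k, (Real.exp (-t) * ∑' m : ℕ,
              t ^ ((m:ℝ) + ((r:ℝ) + 1 + c) / k - 1) / Real.Gamma ((m:ℝ) + ((r:ℝ) + 1 + c) / k)))
            = ∑ r ∈ Finset.range k,
              (Real.exp (-t) * (t ^ (((r:ℝ) + 1 + c) / k - 1) / Real.Gamma (((r:ℝ) + 1 + c) / k))
                + ∫ s in (0:ℝ)..t, Real.exp (-s) * s ^ (((r:ℝ) + 1 + c) / k - 1)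
                  / Real.Gamma (((r:ℝ) + 1 + c) / k))
            from Finset.sum_congr rfl fun r _ => hinner r]
        nth_rewrite 1 [show (k:ℝ) = ∑ _r ∈ Finset.range k, (1:ℝ) by simp]
        rw [← Finset.sum_sub_distrib]
    _ = _ := Finset.sum_congr rfl (fun r _ => by ring)

section Tail

variable {α : ℝ}

lemma gfun_integrableOn (hα : 0 < α) :
    IntegrableOn (fun s : ℝ => Real.exp (-s) * s ^ (α - 1) / Real.Gamma α) (Set.Ioi 0) :=
  (Real.GammaIntegral_convergent hα).div_const _

lemma gind_nonneg (hα : 0 < α) (s : ℝ) :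
    0 ≤ (Set.Ioi (0:ℝ)).indicator (fun s : ℝ => Real.exp (-s) * s ^ (α - 1) / Real.Gamma α) s := by
  apply Set.indicator_nonneg
  intro x hx
  exact div_nonneg (mul_nonneg (Real.exp_pos _).le (Real.rpow_nonneg (le_of_lt hx) _))
    (Real.Gamma_pos_of_pos hα).le

lemma gind_integrable (hα : 0 < α) :
    Integrable ((Set.Ioi (0:ℝ)).indicator
      (fun s : ℝ => Real.exp (-s) * s ^ (α - 1) / Real.Gamma α)) :=
  (gfun_integrableOn hα).integrable_indicator measurableSet_Ioi

lemma gind_measurable :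
    Measurable ((Set.Ioi (0:ℝ)).indicator
      (fun s : ℝ => Real.exp (-s) * s ^ (α - 1) / Real.Gamma α)) := by
  have heq : (Set.Ioi (0:ℝ)).indicator
        (fun s : ℝ => Real.exp (-s) * s ^ (α - 1) / Real.Gamma α)
      = (Set.Ioi (0:ℝ)).indicator
        (fun s : ℝ => Real.exp (-s) * Real.exp (Real.log s * (α - 1)) / Real.Gamma α) := by
    funext s
    by_cases hs : s ∈ Set.Ioi (0:ℝ)
    · rw [Set.indicator_of_mem hs, Set.indicator_of_mem hs, Real.rpow_def_of_pos hs]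
    · rw [Set.indicator_of_notMem hs, Set.indicator_of_notMem hs]
  rw [heq]
  apply Measurable.indicator _ measurableSet_Ioi
  exact ((Real.measurable_exp.comp measurable_neg).mul
    (Real.measurable_exp.comp (Real.measurable_log.mul measurable_const))).div_const _

lemma tail_antitone (hα : 0 < α) :
    Antitone (fun t : ℝ => ∫ s in Set.Ioi t, (Set.Ioi (0:ℝ)).indicator
      (fun s : ℝ => Real.exp (-s) * s ^ (α - 1) / Real.Gamma α) s) := by
  intro t1 t2 h
  apply setIntegral_mono_set ((gind_integrable hα).integrableOn)
    (ae_of_all _ (gind_nonneg hα))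
    (HasSubset.Subset.eventuallyLE (Set.Ioi_subset_Ioi h))

lemma tail_nonneg (hα : 0 < α) (t : ℝ) :
    0 ≤ ∫ s in Set.Ioi t, (Set.Ioi (0:ℝ)).indicator
      (fun s : ℝ => Real.exp (-s) * s ^ (α - 1) / Real.Gamma α) s :=
  setIntegral_nonneg measurableSet_Ioi (fun s _ => gind_nonneg hα s)

lemma gfun_integral (hα : 0 < α) :
    ∫ s in Set.Ioi (0:ℝ), Real.exp (-s) * s ^ (α - 1) / Real.Gamma α = 1 := by
  rw [integral_div, ← Real.Gamma_eq_integral hα]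
  exact div_self (Real.Gamma_pos_of_pos hα).ne'

lemma tail_eq (hα : 0 < α) {t : ℝ} (ht : 0 < t) :
    (∫ s in Set.Ioi t, (Set.Ioi (0:ℝ)).indicator
        (fun s : ℝ => Real.exp (-s) * s ^ (α - 1) / Real.Gamma α) s)
      = 1 - ∫ s in (0:ℝ)..t, Real.exp (-s) * s ^ (α - 1) / Real.Gamma α := by
  have hsplit : (∫ s in Set.Ioi (0:ℝ), Real.exp (-s) * s ^ (α - 1) / Real.Gamma α)
      = (∫ s in Set.Ioc (0:ℝ) t, Real.exp (-s) * s ^ (α - 1) / Real.Gamma α)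
        + ∫ s in Set.Ioi t, Real.exp (-s) * s ^ (α - 1) / Real.Gamma α := by
    rw [← setIntegral_union (Set.Ioc_disjoint_Ioi le_rfl) measurableSet_Ioi
      ((gfun_integrableOn hα).mono_set Set.Ioc_subset_Ioi_self)
      ((gfun_integrableOn hα).mono_set (Set.Ioi_subset_Ioi ht.le)),
      Set.Ioc_union_Ioi_eq_Ioi ht.le]
  have htail : (∫ s in Set.Ioi t, (Set.Ioi (0:ℝ)).indicator
        (fun s : ℝ => Real.exp (-s) * s ^ (α - 1) / Real.Gamma α) s)
      = ∫ s in Set.Ioi t, Real.exp (-s) * s ^ (α - 1) / Real.Gamma α := by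
    apply setIntegral_congr_fun measurableSet_Ioi
    intro s hs
    exact Set.indicator_of_mem (lt_trans ht hs) _
  rw [htail, intervalIntegral.integral_of_le ht.le]
  have h1 := gfun_integral hα
  linarith [hsplit, h1]

lemma tail_lintegral (hα : 0 < α) :
    ∫⁻ t in Set.Ioi (0:ℝ), ENNReal.ofReal (∫ s in Set.Ioi t, (Set.Ioi (0:ℝ)).indicator
        (fun s : ℝ => Real.exp (-s) * s ^ (α - 1) / Real.Gamma α) s)
      = ENNReal.ofReal α := by
  set gi : ℝ → ℝ := (Set.Ioi (0:ℝ)).indicator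
    (fun s : ℝ => Real.exp (-s) * s ^ (α - 1) / Real.Gamma α) with hgi
  set G : ℝ → ℝ≥0∞ := fun s => ENNReal.ofReal (gi s) with hG
  have hGmeas : Measurable G := gind_measurable.ennreal_ofReal
  set S : Set (ℝ × ℝ) := {p : ℝ × ℝ | 0 < p.1 ∧ p.1 < p.2} with hS
  have hSmeas : MeasurableSet S :=
    (measurableSet_lt measurable_const measurable_fst).inter
      (measurableSet_lt measurable_fst measurable_snd)
  set F : ℝ × ℝ → ℝ≥0∞ := S.indicator (fun p => G p.2) with hF
  have hFmeas : Measurable F := (hGmeas.comp measurable_snd).indicator hSmeas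
  have step1 : ∀ t : ℝ, ENNReal.ofReal (∫ s in Set.Ioi t, gi s) = ∫⁻ s in Set.Ioi t, G s :=
    fun t => ofReal_integral_eq_lintegral_ofReal ((gind_integrable hα).integrableOn)
      (ae_of_all _ (gind_nonneg hα))
  calc ∫⁻ t in Set.Ioi (0:ℝ), ENNReal.ofReal (∫ s in Set.Ioi t, gi s)
      = ∫⁻ t in Set.Ioi (0:ℝ), ∫⁻ s in Set.Ioi t, G s := by
        apply setLIntegral_congr_fun measurableSet_Ioi
        exact fun t _ => step1 t
    _ = ∫⁻ t, ∫⁻ s, F (t, s) := by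
        rw [← lintegral_indicator measurableSet_Ioi]
        apply lintegral_congr
        intro t
        by_cases ht : t ∈ Set.Ioi (0:ℝ)
        · rw [Set.indicator_of_mem ht]
          rw [← lintegral_indicator measurableSet_Ioi]
          apply lintegral_congr
          intro s
          by_cases hs : s ∈ Set.Ioi t
          · rw [Set.indicator_of_mem hs, hF,
              Set.indicator_of_mem (show (t, s) ∈ S from ⟨ht, hs⟩)]
          · rw [Set.indicator_of_notMem hs, hF,
              Set.indicator_of_notMem (fun hmem => hs hmem.2)]
        · rw [Set.indicator_of_notMem ht]
          symm
          have hz : ∀ s : ℝ, F (t, s) = 0 := fun s =>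
            Set.indicator_of_notMem (fun hmem => ht hmem.1) _
          simp [hz]
    _ = ∫⁻ s, ∫⁻ t, F (t, s) := lintegral_lintegral_swap hFmeas.aemeasurable
    _ = ∫⁻ s, G s * ENNReal.ofReal s := by
        apply lintegral_congr
        intro s
        have hind : ∫⁻ t, F (t, s) = ∫⁻ t, (Set.Ioo (0:ℝ) s).indicator (fun _ => G s) t := by
          apply lintegral_congr
          intro u
          by_cases h : u ∈ Set.Ioo (0:ℝ) s
          · rw [Set.indicator_of_mem h, hF, Set.indicator_of_mem (show (u, s) ∈ S from ⟨h.1, h.2⟩)]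
          · rw [Set.indicator_of_notMem h, hF,
              Set.indicator_of_notMem (fun hmem => h ⟨hmem.1, hmem.2⟩)]
        rw [hind, lintegral_indicator measurableSet_Ioo, setLIntegral_const,
          Real.volume_Ioo, sub_zero]
    _ = ∫⁻ s, ENNReal.ofReal ((Set.Ioi (0:ℝ)).indicator
          (fun s : ℝ => Real.exp (-s) * s ^ (α - 1) / Real.Gamma α * s) s) := by
        apply lintegral_congr
        intro s
        by_cases hs : s ∈ Set.Ioi (0:ℝ)
        · simp only [hG, hgi, Set.indicator_of_mem hs]
          rw [← ENNReal.ofReal_mul (div_nonneg (mul_nonneg (Real.exp_pos _).le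
              (Real.rpow_nonneg (le_of_lt hs) _)) (Real.Gamma_pos_of_pos hα).le)]
        · simp only [hG, hgi, Set.indicator_of_notMem hs]
          simp
    _ = ENNReal.ofReal α := by
        have hwint : Integrable ((Set.Ioi (0:ℝ)).indicator
            (fun s : ℝ => Real.exp (-s) * s ^ (α - 1) / Real.Gamma α * s)) := by
          apply IntegrableOn.integrable_indicator _ measurableSet_Ioi
          apply IntegrableOn.congr_fun ((Real.GammaIntegral_convergent
            (show (0:ℝ) < α + 1 by linarith)).div_const (Real.Gamma α)) _ measurableSet_Ioi
          intro s hs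
          simp only [show α + 1 - 1 = (α - 1) + 1 by ring, Real.rpow_add_one (ne_of_gt hs)]
          ring
        have hwnn : 0 ≤ (Set.Ioi (0:ℝ)).indicator
            (fun s : ℝ => Real.exp (-s) * s ^ (α - 1) / Real.Gamma α * s) := by
          intro s
          apply Set.indicator_nonneg
          intro x hx
          have h1 : (0:ℝ) ≤ Real.exp (-x) * x ^ (α - 1) / Real.Gamma α :=
            div_nonneg (mul_nonneg (Real.exp_pos _).le (Real.rpow_nonneg (le_of_lt hx) _))
              (Real.Gamma_pos_of_pos hα).le
          exact mul_nonneg h1 (le_of_lt hx)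
        rw [← ofReal_integral_eq_lintegral_ofReal hwint (ae_of_all _ hwnn)]
        congr 1
        rw [integral_indicator measurableSet_Ioi]
        have : ∀ s ∈ Set.Ioi (0:ℝ), Real.exp (-s) * s ^ (α - 1) / Real.Gamma α * s
            = Real.exp (-s) * s ^ (α + 1 - 1) / Real.Gamma α := by
          intro s hs
          rw [show α + 1 - 1 = (α - 1) + 1 by ring, Real.rpow_add_one (ne_of_gt hs)]
          ring
        rw [setIntegral_congr_fun measurableSet_Ioi this, integral_div,
          ← Real.Gamma_eq_integral (show (0:ℝ) < α + 1 by linarith),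
          Real.Gamma_add_one (ne_of_gt hα), mul_div_assoc,
          div_self (Real.Gamma_pos_of_pos hα).ne', mul_one]

lemma tail_integrableOn (hα : 0 < α) :
    IntegrableOn (fun t : ℝ => ∫ s in Set.Ioi t, (Set.Ioi (0:ℝ)).indicator
      (fun s : ℝ => Real.exp (-s) * s ^ (α - 1) / Real.Gamma α) s) (Set.Ioi 0) := by
  constructor
  · exact ((tail_antitone hα).measurable).aestronglyMeasurable
  · rw [hasFiniteIntegral_iff_ofReal (ae_of_all _ (fun t => tail_nonneg hα t))]
    rw [tail_lintegral hα]
    exact ENNReal.ofReal_lt_top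

lemma tail_integral (hα : 0 < α) :
    ∫ t in Set.Ioi (0:ℝ), (∫ s in Set.Ioi t, (Set.Ioi (0:ℝ)).indicator
      (fun s : ℝ => Real.exp (-s) * s ^ (α - 1) / Real.Gamma α) s) = α := by
  rw [integral_eq_lintegral_of_nonneg_ae (ae_of_all _ (fun t => tail_nonneg hα t))
    ((tail_antitone hα).measurable.aestronglyMeasurable)]
  rw [tail_lintegral hα]
  exact ENNReal.toReal_ofReal hα.le

end Tail

/-- For a positive integer `k` and real `c > -1`,
`∫_0^∞ [k − e^{-t} ∑_{j≥0} t^{(j+c+1)/k − 1}/Γ((j+1+c)/k)] dt = c + (1−k)/2`. -/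
theorem integral_mittagLeffler_defect (k : ℕ) (hk : 0 < k) (c : ℝ) (hc : -1 < c) :
    (∫ t in Set.Ioi (0 : ℝ),
        ((k : ℝ) - Real.exp (-t) *
          ∑' j : ℕ, t ^ (((j : ℝ) + c + 1) / k - 1) / Real.Gamma (((j : ℝ) + 1 + c) / k)))
      = c + (1 - k) / 2 := by
  have hkpos : (0:ℝ) < (k:ℝ) := Nat.cast_pos.mpr hk
  have hk0 : (k:ℝ) ≠ 0 := hkpos.ne'
  have hαpos : ∀ r : ℕ, 0 < ((r:ℝ) + 1 + c) / k := by
    intro r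
    apply div_pos _ hkpos
    have := Nat.cast_nonneg (α := ℝ) r
    linarith
  set H : ℝ → ℝ := fun t => ∑ r ∈ Finset.range k,
      ((∫ s in Set.Ioi t, (Set.Ioi (0:ℝ)).indicator
          (fun s : ℝ => Real.exp (-s) * s ^ (((r:ℝ) + 1 + c) / k - 1)
            / Real.Gamma (((r:ℝ) + 1 + c) / k)) s)
        - Real.exp (-t) * (t ^ (((r:ℝ) + 1 + c) / k - 1)
            / Real.Gamma (((r:ℝ) + 1 + c) / k))) with hH
  have hcongr : Set.EqOn (fun t : ℝ => ((k : ℝ) - Real.exp (-t) *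
      ∑' j : ℕ, t ^ (((j : ℝ) + c + 1) / k - 1) / Real.Gamma (((j : ℝ) + 1 + c) / k)))
      H (Set.Ioi 0) := by
    intro t ht
    have ht' : (0:ℝ) < t := ht
    show ((k : ℝ) - Real.exp (-t) *
        ∑' j : ℕ, t ^ (((j : ℝ) + c + 1) / k - 1) / Real.Gamma (((j : ℝ) + 1 + c) / k)) = H t
    rw [pointwise_eq k hk c hc ht']
    simp only [hH]
    apply Finset.sum_congr rfl
    intro r _
    rw [tail_eq (hαpos r) ht']
  rw [setIntegral_congr_fun measurableSet_Ioi hcongr]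
  have hdens : ∀ r : ℕ, IntegrableOn (fun t : ℝ => Real.exp (-t) *
      (t ^ (((r:ℝ) + 1 + c) / k - 1) / Real.Gamma (((r:ℝ) + 1 + c) / k))) (Set.Ioi 0) :=
    fun r => IntegrableOn.congr_fun (gfun_integrableOn (hαpos r))
      (fun x _ => mul_div_assoc _ _ _) measurableSet_Ioi
  have hdensint : ∀ r : ℕ, (∫ t in Set.Ioi (0:ℝ), Real.exp (-t) *
      (t ^ (((r:ℝ) + 1 + c) / k - 1) / Real.Gamma (((r:ℝ) + 1 + c) / k))) = 1 := by
    intro r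
    rw [setIntegral_congr_fun measurableSet_Ioi
      (fun x _ => (mul_div_assoc (Real.exp (-x)) (x ^ (((r:ℝ) + 1 + c) / k - 1))
        (Real.Gamma (((r:ℝ) + 1 + c) / k))).symm)]
    exact gfun_integral (hαpos r)
  have hterm_int : ∀ r ∈ Finset.range k, Integrable (fun t : ℝ =>
      (∫ s in Set.Ioi t, (Set.Ioi (0:ℝ)).indicator
          (fun s : ℝ => Real.exp (-s) * s ^ (((r:ℝ) + 1 + c) / k - 1)
            / Real.Gamma (((r:ℝ) + 1 + c) / k)) s)
        - Real.exp (-t) * (t ^ (((r:ℝ) + 1 + c) / k - 1)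
            / Real.Gamma (((r:ℝ) + 1 + c) / k))) (volume.restrict (Set.Ioi 0)) :=
    fun r _ => (tail_integrableOn (hαpos r)).sub (hdens r)
  simp only [hH]
  rw [integral_finset_sum _ hterm_int]
  have hterm_val : ∀ r ∈ Finset.range k, (∫ t in Set.Ioi (0:ℝ),
      ((∫ s in Set.Ioi t, (Set.Ioi (0:ℝ)).indicator
          (fun s : ℝ => Real.exp (-s) * s ^ (((r:ℝ) + 1 + c) / k - 1)
            / Real.Gamma (((r:ℝ) + 1 + c) / k)) s)
        - Real.exp (-t) * (t ^ (((r:ℝ) + 1 + c) / k - 1)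
            / Real.Gamma (((r:ℝ) + 1 + c) / k))))
      = ((r:ℝ) + 1 + c) / k - 1 := by
    intro r _
    rw [integral_sub (tail_integrableOn (hαpos r)) (hdens r)]
    rw [tail_integral (hαpos r), hdensint r]
  rw [Finset.sum_congr rfl hterm_val]
  -- final arithmetic
  have h2 := Finset.sum_range_id_mul_two k
  have h3 : (∑ r ∈ Finset.range k, (r:ℝ)) * 2 = (k:ℝ) * ((k:ℝ) - 1) := by
    have h4 := congrArg (fun n : ℕ => (n:ℝ)) h2
    push_cast [Nat.cast_sub hk] at h4
    exact h4
  have h5 : (∑ r ∈ Finset.range k, ((r:ℝ) + 1 + c))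
      = (k:ℝ) * ((k:ℝ) - 1) / 2 + (k:ℝ) * (1 + c) := by
    rw [show (fun r : ℕ => ((r:ℝ) + 1 + c)) = (fun r : ℕ => ((r:ℝ) + (1 + c))) from
      funext fun r => by ring]
    rw [Finset.sum_add_distrib, Finset.sum_const, Finset.card_range, nsmul_eq_mul]
    linarith
  rw [show (fun r : ℕ => ((r:ℝ) + 1 + c) / k - 1) = (fun r : ℕ => ((r:ℝ) + 1 + c) / k - 1)
    from rfl]
  rw [Finset.sum_sub_distrib, Finset.sum_const, Finset.card_range, nsmul_eq_mul, mul_one,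
    ← Finset.sum_div, h5]
  field_simp
  ring
end

section
/- Let (f_n) be a sequence of functions on ℂ² that are holomorphic in the first variable and anti-holomorphic in the second, converging to 0 uniformly on compact subsets of (ℂ∖{0})². Then f_n → 0 uniformly on compact subsets of ℂ². -/
/-!
Apply the maximum modulus principle twice: first in `z` for each fixed `w` on the circle
`|w| = R`, then in `w̄` for each fixed `z` in the disc `|z| ≤ R`. This bounds `f_n` on the
bidisc `|z|, |w| ≤ R` by its supremum on the torus `|z| = |w| = R`, a compact subset of
`(ℂ∖{0})²` on which `f_n → 0` uniformly by hypothesis.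
-/

open Filter Metric

variable {E F : Type*} [NormedAddCommGroup E] [NormedSpace ℂ E] [Nontrivial E]
  [NormedAddCommGroup F] [NormedSpace ℂ F]

theorem Complex.norm_le_of_forall_mem_sphere_norm_le {f : E → F} {c : E} {R : ℝ} (hR : 0 < R)
    (hf : DiffContOnCl ℂ f (ball c R)) {C : ℝ} (hC : ∀ u ∈ sphere c R, ‖f u‖ ≤ C) {z : E}
    (hz : z ∈ closedBall c R) : ‖f z‖ ≤ C :=
  Complex.norm_le_of_forall_mem_frontier_norm_le isBounded_ball hf
    (by rwa [frontier_ball c hR.ne']) (by rwa [closure_ball c hR.ne'])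

theorem norm_le_of_forall_mem_torus_norm_le {g : ℂ → ℂ → F}
    (hg₁ : ∀ w, Differentiable ℂ fun z => g z w)
    (hg₂ : ∀ z, Differentiable ℂ fun w => g z (starRingEnd ℂ w)) {R : ℝ} (hR : 0 < R) {C : ℝ}
    (hC : ∀ u ∈ sphere (0 : ℂ) R, ∀ v ∈ sphere (0 : ℂ) R, ‖g u v‖ ≤ C) {z w : ℂ}
    (hz : z ∈ closedBall 0 R) (hw : w ∈ closedBall 0 R) : ‖g z w‖ ≤ C := by
  have on_circle : ∀ v ∈ sphere (0 : ℂ) R, ‖g z v‖ ≤ C := fun v hv =>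
    Complex.norm_le_of_forall_mem_sphere_norm_le hR (hg₁ v).diffContOnCl (hC · · v hv) hz
  simpa using Complex.norm_le_of_forall_mem_sphere_norm_le (c := 0) (z := starRingEnd ℂ w) hR
    (hg₂ z).diffContOnCl (fun v hv => on_circle _ (by simpa using hv)) (by simpa using hw)

theorem sphere_prod_sphere_subset_ne_zero {R : ℝ} (hR : 0 < R) :
    sphere (0 : ℂ) R ×ˢ sphere (0 : ℂ) R ⊆ {p : ℂ × ℂ | p.1 ≠ 0 ∧ p.2 ≠ 0} :=
  fun _ ⟨h₁, h₂⟩ => ⟨ne_of_mem_sphere h₁ hR.ne', ne_of_mem_sphere h₂ hR.ne'⟩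

theorem tendstoUniformlyOn_closedBall_prod_of_torus {ι : Type*} {l : Filter ι}
    {G : ι → ℂ → ℂ → F} (hG₁ : ∀ n w, Differentiable ℂ fun z => G n z w)
    (hG₂ : ∀ n z, Differentiable ℂ fun w => G n z (starRingEnd ℂ w)) {R : ℝ} (hR : 0 < R)
    (h : TendstoUniformlyOn (fun n p => G n p.1 p.2) 0 l (sphere 0 R ×ˢ sphere 0 R)) :
    TendstoUniformlyOn (fun n p => G n p.1 p.2) 0 l (closedBall 0 R ×ˢ closedBall 0 R) := by
  rw [Metric.tendstoUniformlyOn_iff] at h ⊢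
  intro ε hε
  filter_upwards [h (ε / 2) (half_pos hε)] with n hn
  rintro ⟨z, w⟩ ⟨hz, hw⟩
  have torus_bound : ∀ u ∈ sphere (0 : ℂ) R, ∀ v ∈ sphere (0 : ℂ) R, ‖G n u v‖ ≤ ε / 2 :=
    fun u hu v hv => by simpa using (hn (u, v) ⟨hu, hv⟩).le
  simpa using (norm_le_of_forall_mem_torus_norm_le (hG₁ n) (hG₂ n) hR torus_bound hz hw).trans_lt
    (half_lt_self hε)

/-- If `(f_n)` is a sequence of functions on `ℂ²`, holomorphic in the first
variable and anti-holomorphic in the second, converging to `0` uniformly on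
compact subsets of `(ℂ∖{0})²`, then `f_n → 0` uniformly on compact subsets
of `ℂ²`. -/
theorem hermitian_entire_convergence (f : ℕ → ℂ → ℂ → ℂ)
    (hol₁ : ∀ n w, Differentiable ℂ fun z => f n z w)
    (hol₂ : ∀ n z, Differentiable ℂ fun w => f n z ((starRingEnd ℂ) w))
    (hconv : ∀ K : Set (ℂ × ℂ), IsCompact K →
      K ⊆ {p : ℂ × ℂ | p.1 ≠ 0 ∧ p.2 ≠ 0} →
      TendstoUniformlyOn (fun n p => f n p.1 p.2) 0 atTop K) :
    ∀ K : Set (ℂ × ℂ), IsCompact K →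
      TendstoUniformlyOn (fun n p => f n p.1 p.2) 0 atTop K := by
  intro K hK
  obtain ⟨R, hR, hKR⟩ := hK.isBounded.subset_closedBall_lt 0 (0 : ℂ × ℂ)
  rw [← closedBall_prod_same] at hKR
  have torus := hconv _ ((isCompact_sphere 0 R).prod (isCompact_sphere 0 R))
    (sphere_prod_sphere_subset_ne_zero hR)
  exact (tendstoUniformlyOn_closedBall_prod_of_torus hol₁ hol₂ hR torus).mono hKR
end
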